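/- Let P ∈ ℝ[X₁,…,Xₙ] be homogeneous of degree k. Then ((R∘Δ − b_{k,0}) ∘ (R∘Δ − b_{k,1}) ∘ ⋯ ∘ (R∘Δ − b_{k,⌊k/2⌋}))(P) = 0, where R∘Δ − b_{k,s} denotes the operator Q ↦ F·Δ(Q) − b_{k,s}·Q. (That is, the polynomial ∏_{s=0}^{⌊k/2⌋}(x − b_{k,s}) annihilates the operator R∘Δ on homogeneous polynomials of degree k.) -/

import Mathlib

open MvPolynomial

/-- Signature: `ε_i = 1` for `i < p` (1-based: `i ≤ p`), `ε_i = -1` otherwise. -/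
noncomputable def sgn (p : ℕ) {n : ℕ} (i : Fin n) : ℝ := if (i : ℕ) < p then 1 else -1

/-- `F = ∑ ε_i X_i²`. -/
noncomputable def Fquad (p q : ℕ) : MvPolynomial (Fin (p + q)) ℝ :=
  ∑ i, C (sgn p i) * X i ^ 2

/-- The Laplacian of signature `(p,q)`: `Δ = ∑ ε_i ∂²/∂X_i²`. -/
noncomputable def lap (p q : ℕ) (P : MvPolynomial (Fin (p + q)) ℝ) :
    MvPolynomial (Fin (p + q)) ℝ :=
  ∑ i, C (sgn p i) * pderiv i (pderiv i P)

/-- `b_{k,s} = 2s(n + 2(k - s - 1))` with `n = p + q`. -/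
noncomputable def bCoef (n k s : ℕ) : ℝ :=
  2 * (s : ℝ) * ((n : ℝ) + 2 * ((k : ℝ) - (s : ℝ) - 1))

/-- The composition `(R∘Δ - b_{k,0}) ∘ (R∘Δ - b_{k,1}) ∘ ⋯ ∘ (R∘Δ - b_{k,s})`,
where `R` is multiplication by `F`. -/
noncomputable def opProd (p q k : ℕ) : ℕ → MvPolynomial (Fin (p + q)) ℝ →
    MvPolynomial (Fin (p + q)) ℝ
  | 0, P => Fquad p q * lap p q P - C (bCoef (p + q) k 0) * P
  | s + 1, P => opProd p q k s (Fquad p q * lap p q P - C (bCoef (p + q) k (s + 1)) * P)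

/-! By Euler's identity, `Δ(F·Q) = F·ΔQ + (2n + 4m)·Q` for `Q` homogeneous of degree `m`. Since
`b_{k+2,s+1} = b_{k,s} + 2n + 4k`, this says that `Δ ∘ (RΔ - b_{k+2,s+1}) = (RΔ - b_{k,s}) ∘ Δ` in
degree `k + 2`. Moving `Δ` through the factors and using `b_{k+2,0} = 0` gives
`∏_{s=0}^{j+1} (RΔ - b_{k+2,s}) P = F · ∏_{s=0}^{j} (RΔ - b_{k,s}) ΔP`, which reduces the claim
from degree `k + 2` to degree `k`; in degrees `0` and `1`, `Δ` vanishes. -/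

namespace MvPolynomial

variable {R σ : Type*} [CommSemiring R]

lemma IsHomogeneous.pderiv_eq_zero {φ : MvPolynomial σ R} (h : φ.IsHomogeneous 0) (i : σ) :
    pderiv i φ = 0 := by
  rw [← totalDegree_zero_iff_isHomogeneous, totalDegree_eq_zero_iff_eq_C] at h
  rw [h, pderiv_C]

end MvPolynomial

lemma bCoef_zero (n k : ℕ) : bCoef n k 0 = 0 := by
  simp [bCoef]

lemma bCoef_add_two_succ (n k s : ℕ) :
    bCoef n (k + 2) (s + 1) = bCoef n k s + (2 * n + 4 * k) := by
  simp only [bCoef]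
  push_cast
  ring

section SignatureLaplacian

variable {p q : ℕ}

lemma sgn_mul_self (i : Fin (p + q)) : sgn p i * sgn p i = 1 := by
  unfold sgn; split <;> norm_num

lemma lap_sub (A B : MvPolynomial (Fin (p + q)) ℝ) :
    lap p q (A - B) = lap p q A - lap p q B := by
  simp only [lap, map_sub, mul_sub, Finset.sum_sub_distrib]

lemma lap_C_mul (c : ℝ) (A : MvPolynomial (Fin (p + q)) ℝ) :
    lap p q (C c * A) = C c * lap p q A := by
  simp only [lap, pderiv_C_mul, Finset.mul_sum, mul_left_comm]

lemma isHomogeneous_Fquad : (Fquad p q).IsHomogeneous 2 :=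
  IsHomogeneous.sum _ _ _ fun i _ => isHomogeneous_C_mul_X_pow _ i 2

lemma MvPolynomial.IsHomogeneous.lap {k : ℕ} {P : MvPolynomial (Fin (p + q)) ℝ}
    (hP : P.IsHomogeneous (k + 2)) : (lap p q P).IsHomogeneous k :=
  IsHomogeneous.sum _ _ _ fun _ _ => (hP.pderiv.pderiv).C_mul _

lemma lap_eq_zero_of_isHomogeneous {k : ℕ} (hk : k ≤ 1) {P : MvPolynomial (Fin (p + q)) ℝ}
    (hP : P.IsHomogeneous k) : lap p q P = 0 := by
  have hP' : ∀ i, (pderiv i P).IsHomogeneous 0 := fun i => by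
    simpa [Nat.sub_eq_zero_of_le hk] using hP.pderiv (i := i)
  simp only [lap, (hP' _).pderiv_eq_zero, mul_zero, Finset.sum_const_zero]

lemma pderiv_Fquad (i : Fin (p + q)) :
    pderiv i (Fquad p q) = C (2 * sgn p i) * X i := by
  rw [Fquad, map_sum, Finset.sum_eq_single i]
  · simp only [pderiv_C_mul, pderiv_pow, pderiv_X_self, C_mul, map_ofNat]
    ring
  · intro j _ hj
    simp [pderiv_X_of_ne hj]
  · simp

lemma lap_Fquad_mul {m : ℕ} {Q : MvPolynomial (Fin (p + q)) ℝ} (hQ : Q.IsHomogeneous m) :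
    lap p q (Fquad p q * Q)
      = Fquad p q * lap p q Q + C (2 * (p + q : ℕ) + 4 * m : ℝ) * Q := by
  have term (i : Fin (p + q)) : C (sgn p i) * pderiv i (pderiv i (Fquad p q * Q))
      = 2 * Q + 4 * (X i * pderiv i Q) + Fquad p q * (C (sgn p i) * pderiv i (pderiv i Q)) := by
    have hε : C (sgn p i) * C (sgn p i) = (1 : MvPolynomial (Fin (p + q)) ℝ) := by
      rw [← C_mul, sgn_mul_self, C_1]
    rw [pderiv_mul, map_add, pderiv_mul, pderiv_mul, pderiv_Fquad, pderiv_C_mul, pderiv_X_self,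
      C_mul, map_ofNat]
    linear_combination (2 * Q + 4 * (X i * pderiv i Q)) * hε
  have euler : ∑ i, X i * pderiv i Q = C (m : ℝ) * Q := by
    rw [hQ.sum_X_mul_pderiv, nsmul_eq_mul, ← map_natCast C]
  simp only [lap, term, Finset.sum_add_distrib, ← Finset.mul_sum, euler, Finset.sum_const,
    Finset.card_univ, Fintype.card_fin, nsmul_eq_mul, map_add, map_mul, map_natCast, map_ofNat]
  ring

noncomputable def opFactor (p q k s : ℕ) (P : MvPolynomial (Fin (p + q)) ℝ) :
    MvPolynomial (Fin (p + q)) ℝ :=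
  Fquad p q * lap p q P - C (bCoef (p + q) k s) * P

lemma opProd_zero (k : ℕ) (P : MvPolynomial (Fin (p + q)) ℝ) :
    opProd p q k 0 P = opFactor p q k 0 P := rfl

lemma opProd_succ (k s : ℕ) (P : MvPolynomial (Fin (p + q)) ℝ) :
    opProd p q k (s + 1) P = opProd p q k s (opFactor p q k (s + 1) P) := rfl

lemma opFactor_zero (k : ℕ) (P : MvPolynomial (Fin (p + q)) ℝ) :
    opFactor p q k 0 P = Fquad p q * lap p q P := by
  rw [opFactor, bCoef_zero, C_0, zero_mul, sub_zero]

lemma MvPolynomial.IsHomogeneous.opFactor {k : ℕ} (s : ℕ) {P : MvPolynomial (Fin (p + q)) ℝ}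
    (hP : P.IsHomogeneous (k + 2)) : (opFactor p q (k + 2) s P).IsHomogeneous (k + 2) := by
  refine IsHomogeneous.sub ?_ (hP.C_mul _)
  simpa [add_comm] using isHomogeneous_Fquad.mul hP.lap

lemma lap_opFactor {k : ℕ} (s : ℕ) {P : MvPolynomial (Fin (p + q)) ℝ}
    (hP : P.IsHomogeneous (k + 2)) :
    lap p q (opFactor p q (k + 2) (s + 1) P) = opFactor p q k s (lap p q P) := by
  rw [opFactor, opFactor, lap_sub, lap_C_mul, lap_Fquad_mul hP.lap, bCoef_add_two_succ]
  simp only [map_add, map_mul, map_natCast, map_ofNat]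
  ring

lemma opProd_add_two_succ {k : ℕ} (s : ℕ) {P : MvPolynomial (Fin (p + q)) ℝ}
    (hP : P.IsHomogeneous (k + 2)) :
    opProd p q (k + 2) (s + 1) P = Fquad p q * opProd p q k s (lap p q P) := by
  induction s generalizing P with
  | zero => rw [opProd_succ, opProd_zero, opFactor_zero, lap_opFactor 0 hP, opProd_zero]
  | succ s ih =>
    rw [opProd_succ, ih (hP.opFactor _), lap_opFactor _ hP, opProd_succ]

end SignatureLaplacian

theorem opProd_annihilates_general (p q : ℕ) (k : ℕ)
    (P : MvPolynomial (Fin (p + q)) ℝ) (hP : P.IsHomogeneous k) :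
    opProd p q k (k / 2) P = 0 := by
  induction k using Nat.strong_induction_on generalizing P with
  | _ k ih =>
    match k, hP with
    | 0, hP | 1, hP =>
      rw [opProd_zero, opFactor_zero, lap_eq_zero_of_isHomogeneous (by norm_num) hP, mul_zero]
    | k + 2, hP =>
      rw [show (k + 2) / 2 = k / 2 + 1 by omega, opProd_add_two_succ _ hP,
        ih k (by omega) _ hP.lap, mul_zero]

/-- The polynomial `∏_{s=0}^{⌊k/2⌋} (x - b_{k,s})` annihilates the operator `R∘Δ`
on homogeneous polynomials of degree `k`. -/
theorem opProd_annihilates (p q : ℕ) (hn : 1 ≤ p + q) (k : ℕ)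
    (P : MvPolynomial (Fin (p + q)) ℝ) (hP : P.IsHomogeneous k) :
    opProd p q k (k / 2) P = 0 :=
  opProd_annihilates_general p q k P hP
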